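/- Let κ be an infinite cardinal, let S be a conditionally κ-co-Brouwerian ⟨∨,0⟩-semilattice, let B be a ⟨∨,0⟩-semilattice of cardinality less than κ, and let A be a ⟨∨,0⟩-subsemilattice of B that is cofinal in B (every element of B lies below some element of A). Then every ⟨∨,0⟩-homomorphism from A to S extends to a ⟨∨,0⟩-homomorphism from B to S. -/
import Mathlib


open Cardinal

/-- For an infinite cardinal `κ`, a `⟨∨,0⟩`-semilattice `S` is *conditionally
κ-co-Brouwerian* if it satisfies the `<κ`-interpolation property and the `<κ`-interval
axiom. -/
def CondKappaCoBrouwerian (κ : Cardinal) (S : Type*) [SemilatticeSup S] [OrderBot S] : Prop :=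
  (∀ X Y : Set S, X.Nonempty → Y.Nonempty → #X < κ → #Y < κ →
    (∀ x ∈ X, ∀ y ∈ Y, x ≤ y) →
    ∃ z : S, (∀ x ∈ X, x ≤ z) ∧ ∀ y ∈ Y, z ≤ y) ∧
  (∀ X : Set S, #X < κ → ∀ a b : S, (∀ x ∈ X, a ≤ b ⊔ x) →
    ∃ c : S, a ≤ b ⊔ c ∧ ∀ x ∈ X, c ≤ x)

/-- Let `κ` be an infinite cardinal, `S` a conditionally κ-co-Brouwerian
`⟨∨,0⟩`-semilattice, `B` a `⟨∨,0⟩`-semilattice of cardinality `< κ`, and `A` a cofinal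
`⟨∨,0⟩`-subsemilattice of `B`.  Then every `⟨∨,0⟩`-homomorphism from `A` to `S` extends to a
`⟨∨,0⟩`-homomorphism from `B` to `S`. -/
theorem extend_sup_zero_hom_of_condKappaCoBrouwerian.{u} (κ : Cardinal.{u}) (hκ : ℵ₀ ≤ κ)
    {S B : Type u} [SemilatticeSup S] [OrderBot S] [SemilatticeSup B] [OrderBot B]
    (hS : CondKappaCoBrouwerian κ S) (hB : #B < κ)
    (A : Set B) (hA0 : ⊥ ∈ A) (hAsup : ∀ x ∈ A, ∀ y ∈ A, x ⊔ y ∈ A)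
    (hAcof : ∀ b : B, ∃ a ∈ A, b ≤ a)
    (f : B → S) (hf0 : f ⊥ = ⊥) (hfsup : ∀ x ∈ A, ∀ y ∈ A, f (x ⊔ y) = f x ⊔ f y) :
    ∃ g : B → S, g ⊥ = ⊥ ∧ (∀ x y : B, g (x ⊔ y) = g x ⊔ g y) ∧ ∀ x ∈ A, g x = f x := by
  classical
  obtain ⟨hint, hiv⟩ := hS
  -- the collection of "good" graphs of partial homomorphisms extending f
  set Good : Set (Set (B × S)) := {G |
    (∀ a ∈ A, (a, f a) ∈ G) ∧
    (∀ x : B, ∀ s t : S, (x, s) ∈ G → (x, t) ∈ G → s = t) ∧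
    (∀ x y : B, ∀ s t : S, (x, s) ∈ G → (y, t) ∈ G → (x ⊔ y, s ⊔ t) ∈ G)} with hGoodDef
  have hF : (fun a => (a, f a)) '' A ∈ Good := by
    refine ⟨fun a ha => ⟨a, ha, rfl⟩, ?_, ?_⟩
    · rintro x s t ⟨a, ha, h1⟩ ⟨a', ha', h2⟩
      obtain ⟨rfl, rfl⟩ := Prod.mk.injEq .. ▸ h1
      obtain ⟨rfl, rfl⟩ := Prod.mk.injEq .. ▸ h2
      rfl
    · rintro x y s t ⟨a, ha, h1⟩ ⟨a', ha', h2⟩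
      obtain ⟨rfl, rfl⟩ := Prod.mk.injEq .. ▸ h1
      obtain ⟨rfl, rfl⟩ := Prod.mk.injEq .. ▸ h2
      exact ⟨a ⊔ a', hAsup a ha a' ha', by simp [hfsup a ha a' ha']⟩
  obtain ⟨M, hFM, hMmem, hmax⟩ : ∃ M, (fun a => (a, f a)) '' A ⊆ M ∧ Maximal (· ∈ Good) M := by
    refine zorn_subset_nonempty Good ?_ _ hF
    intro c hcG hchain hcne
    refine ⟨⋃₀ c, ⟨?_, ?_, ?_⟩, fun s hs => Set.subset_sUnion_of_mem hs⟩
    · intro a ha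
      obtain ⟨G, hG⟩ := hcne
      exact ⟨G, hG, (hcG hG).1 a ha⟩
    · rintro x s t ⟨G1, hG1, h1⟩ ⟨G2, hG2, h2⟩
      rcases hchain.total hG1 hG2 with h | h
      · exact (hcG hG2).2.1 x s t (h h1) h2
      · exact (hcG hG1).2.1 x s t h1 (h h2)
    · rintro x y s t ⟨G1, hG1, h1⟩ ⟨G2, hG2, h2⟩
      rcases hchain.total hG1 hG2 with h | h
      · exact ⟨G2, hG2, (hcG hG2).2.2 x y s t (h h1) h2⟩
      · exact ⟨G1, hG1, (hcG hG1).2.2 x y s t h1 (h h2)⟩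
  obtain ⟨hMA, hMfun, hMsup⟩ := hMmem
  set Dom : Set B := {x | ∃ s, (x, s) ∈ M} with hDomDef
  set φ : B → S := fun x => if h : x ∈ Dom then h.choose else ⊥ with hφDef
  have hmemφ : ∀ x ∈ Dom, (x, φ x) ∈ M := by
    intro x hx
    simp only [hφDef, dif_pos hx]
    exact hx.choose_spec
  have hφval : ∀ x : B, ∀ s : S, (x, s) ∈ M → φ x = s := by
    intro x s hxs
    exact hMfun x (φ x) s (hmemφ x ⟨s, hxs⟩) hxs
  have hADom : ∀ a ∈ A, a ∈ Dom := fun a ha => ⟨f a, hMA a ha⟩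
  have hφA : ∀ a ∈ A, φ a = f a := fun a ha => hφval a (f a) (hMA a ha)
  have hDomSup : ∀ x ∈ Dom, ∀ y ∈ Dom, x ⊔ y ∈ Dom :=
    fun x hx y hy => ⟨φ x ⊔ φ y, hMsup x y (φ x) (φ y) (hmemφ x hx) (hmemφ y hy)⟩
  have hφsup : ∀ x ∈ Dom, ∀ y ∈ Dom, φ (x ⊔ y) = φ x ⊔ φ y :=
    fun x hx y hy => hφval _ _ (hMsup x y (φ x) (φ y) (hmemφ x hx) (hmemφ y hy))
  have hφmono : ∀ x ∈ Dom, ∀ y ∈ Dom, x ≤ y → φ x ≤ φ y := by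
    intro x hx y hy hxy
    have h1 : φ (x ⊔ y) = φ x ⊔ φ y := hφsup x hx y hy
    rw [sup_eq_right.2 hxy] at h1
    rw [h1]; exact le_sup_left
  -- the key claim : Dom = B
  have hDomAll : ∀ b : B, b ∈ Dom := by
    intro b
    by_contra hb
    set X : Set S := φ '' {a | a ∈ Dom ∧ b ≤ a} with hXDef
    have hXne : X.Nonempty := by
      obtain ⟨a, ha, hba⟩ := hAcof b
      exact ⟨φ a, ⟨a, ⟨hADom a ha, hba⟩, rfl⟩⟩
    have hXlt : #X < κ :=
      lt_of_le_of_lt (le_trans Cardinal.mk_image_le (Cardinal.mk_set_le _)) hB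
    set P : Set (B × B) := {p | p.1 ∈ Dom ∧ p.2 ∈ Dom ∧ p.1 ≤ p.2 ⊔ b} with hPDef
    have hc : ∀ p ∈ P, ∃ c : S, φ p.1 ≤ φ p.2 ⊔ c ∧ ∀ x ∈ X, c ≤ x := by
      rintro ⟨a, a'⟩ ⟨ha, ha', hle⟩
      refine hiv X hXlt (φ a) (φ a') ?_
      rintro x ⟨a'', ⟨ha'', hba''⟩, rfl⟩
      have h1 : a ≤ a' ⊔ a'' := le_trans hle (sup_le_sup_left hba'' a')
      have h2 : φ a ≤ φ (a' ⊔ a'') :=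
        hφmono a ha (a' ⊔ a'') (hDomSup a' ha' a'' ha'') h1
      rwa [hφsup a' ha' a'' ha''] at h2
    choose cfun hc1 hc2 using hc
    set C : Set S := Set.range (fun q : P => cfun q q.2) with hCDef
    have hCne : C.Nonempty := by
      refine ⟨cfun (⊥, ⊥) ⟨⟨f ⊥, hMA ⊥ hA0⟩, ⟨f ⊥, hMA ⊥ hA0⟩, bot_le⟩, ?_⟩
      exact ⟨⟨(⊥, ⊥), ⟨f ⊥, hMA ⊥ hA0⟩, ⟨f ⊥, hMA ⊥ hA0⟩, bot_le⟩, rfl⟩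
    have hClt : #C < κ := by
      refine lt_of_le_of_lt (le_trans Cardinal.mk_range_le (Cardinal.mk_set_le _)) ?_
      have : #(B × B) = #B * #B := by
        simp [Cardinal.mk_prod]
      rw [this]
      exact Cardinal.mul_lt_of_lt hκ hB hB
    obtain ⟨s, hs1, hs2⟩ := hint C X hCne hXne hClt hXlt (by
      rintro c ⟨⟨p, hp⟩, rfl⟩ x hx
      exact hc2 p hp x hx)
    have hsX : ∀ a ∈ Dom, b ≤ a → s ≤ φ a := by
      intro a ha hba
      exact hs2 (φ a) ⟨a, ⟨ha, hba⟩, rfl⟩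
    have hkey : ∀ a ∈ Dom, ∀ a' ∈ Dom, a ≤ a' ⊔ b → φ a ≤ φ a' ⊔ s := by
      intro a ha a' ha' hle
      have hp : ((a, a') : B × B) ∈ P := ⟨ha, ha', hle⟩
      exact le_trans (hc1 (a, a') hp)
        (sup_le_sup_left (hs1 _ ⟨⟨(a, a'), hp⟩, rfl⟩) _)
    -- the extended graph
    set M' : Set (B × S) := M ∪ {q | ∃ a ∈ Dom, q = (a ⊔ b, φ a ⊔ s)} with hM'Def
    -- if an element of the new part coincides in first coordinate with an old element
    have hglue : ∀ a ∈ Dom, ∀ x ∈ Dom, x = a ⊔ b → φ x = φ a ⊔ s := by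
      intro a ha x hx hxe
      have hbx : b ≤ x := hxe ▸ le_sup_right
      have hax : a ≤ x := hxe ▸ le_sup_left
      refine le_antisymm (hkey x hx a ha (le_of_eq hxe)) ?_
      exact sup_le (hφmono a ha x hx hax) (hsX x hx hbx)
    have hM'Good : M' ∈ Good := by
      refine ⟨fun a ha => Or.inl (hMA a ha), ?_, ?_⟩
      · rintro x u t (h1 | ⟨a, ha, h1⟩) (h2 | ⟨a', ha', h2⟩)
        · exact hMfun x u t h1 h2
        · obtain ⟨he1, he2⟩ := Prod.mk.injEq .. ▸ h2
          have := hglue a' ha' x ⟨u, h1⟩ he1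
          rw [hφval x u h1] at this
          rw [this, he2]
        · obtain ⟨he1, he2⟩ := Prod.mk.injEq .. ▸ h1
          have := hglue a ha x ⟨t, h2⟩ he1
          rw [hφval x t h2] at this
          rw [he2, ← this]
        · obtain ⟨he1, he2⟩ := Prod.mk.injEq .. ▸ h1
          obtain ⟨he1', he2'⟩ := Prod.mk.injEq .. ▸ h2
          have hee : a ⊔ b = a' ⊔ b := by rw [← he1, ← he1']
          have hle1 : φ a ⊔ s ≤ φ a' ⊔ s := by
            exact sup_le (hkey a ha a' ha' (le_sup_left.trans hee.le)) le_sup_right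
          have hle2 : φ a' ⊔ s ≤ φ a ⊔ s := by
            exact sup_le (hkey a' ha' a ha (le_sup_left.trans hee.symm.le)) le_sup_right
          rw [he2, he2', le_antisymm hle1 hle2]
      · rintro x y u t (h1 | ⟨a, ha, h1⟩) (h2 | ⟨a', ha', h2⟩)
        · exact Or.inl (hMsup x y u t h1 h2)
        · obtain ⟨he1, he2⟩ := Prod.mk.injEq .. ▸ h2
          refine Or.inr ⟨x ⊔ a', hDomSup x ⟨u, h1⟩ a' ha', ?_⟩
          rw [he1, he2, hφsup x ⟨u, h1⟩ a' ha', hφval x u h1, ← sup_assoc, ← sup_assoc]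
        · obtain ⟨he1, he2⟩ := Prod.mk.injEq .. ▸ h1
          refine Or.inr ⟨a ⊔ y, hDomSup a ha y ⟨t, h2⟩, ?_⟩
          rw [he1, he2, hφsup a ha y ⟨t, h2⟩, hφval y t h2]
          simp only [Prod.mk.injEq]
          constructor
          · rw [sup_assoc, sup_comm b y, ← sup_assoc]
          · rw [sup_assoc, sup_comm s t, ← sup_assoc]
        · obtain ⟨he1, he2⟩ := Prod.mk.injEq .. ▸ h1
          obtain ⟨he1', he2'⟩ := Prod.mk.injEq .. ▸ h2
          refine Or.inr ⟨a ⊔ a', hDomSup a ha a' ha', ?_⟩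
          rw [he1, he2, he1', he2', hφsup a ha a' ha']
          simp only [Prod.mk.injEq]
          constructor
          · rw [sup_sup_sup_comm, sup_idem]
          · rw [sup_sup_sup_comm, sup_idem]
    have hMM' : M' = M := subset_antisymm (hmax hM'Good Set.subset_union_left) Set.subset_union_left
    have : b ∈ Dom := by
      have hmem : ((⊥ : B) ⊔ b, φ ⊥ ⊔ s) ∈ M' :=
        Or.inr ⟨⊥, ⟨f ⊥, hMA ⊥ hA0⟩, rfl⟩
      rw [hMM'] at hmem
      rw [bot_sup_eq] at hmem
      exact ⟨φ ⊥ ⊔ s, hmem⟩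
    exact hb this
  refine ⟨φ, ?_, ?_, hφA⟩
  · rw [hφA ⊥ hA0, hf0]
  · intro x y
    exact hφsup x (hDomAll x) y (hDomAll y)
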